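/- arXiv:2604.23322 — 3 statements merged into one kernel-verified Lean document; each statement's English description precedes it below -/
import Mathlib

section
/- Let k be an algebraically closed field and let A = k·1 ⊕ J be a local commutative k-algebra of dimension 5 with dim_k J = 4 and J² = 0. Let V = k^6 be a faithful A-module. Then dim_k End_A(V) ≥ 6. In particular, the image of A in M_6(k) under the action on V is not a maximal commutative subalgebra. -/
/-- The image of a `k`-algebra `A` acting on `k⁶` inside the matrix algebra `M₆(k)`. -/
noncomputable def matrixImageOfAction (k A : Type*) [Field k] [CommRing A] [Algebra k A]
    [Module A (Fin 6 → k)] [IsScalarTower k A (Fin 6 → k)]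
    [SMulCommClass A k (Fin 6 → k)] :
    Subalgebra k (Matrix (Fin 6) (Fin 6) k) :=
  ((LinearMap.toMatrixAlgEquiv' :
      Module.End k (Fin 6 → k) ≃ₐ[k] Matrix (Fin 6) (Fin 6) k).toAlgHom.comp
    (Algebra.lsmul k k (Fin 6 → k) : A →ₐ[k] Module.End k (Fin 6 → k))).range

/-!
With `n = dim V`, put `JV ⊆ V` and `V^J = {v | J v = 0}`; `J² = 0` gives `JV ⊆ V^J`. A `k`-linear
endomorphism killing `JV` with image in `V^J` commutes with `J`, hence is `A`-linear because
`A = k + J`. These maps together with the scalars give an injection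
`Hom_k(V/JV, V^J) × k ↪ End_A(V)`, so `dim End_A(V) ≥ (n - d) e + 1` with `d = dim JV ≤ e = dim V^J`,
and faithfulness forces `1 ≤ d` and `e < n`; then `(n - d) d + 1 ≥ n`. For `n = 6` this gives
`dim End_A(V) ≥ 6 > 5 ≥` the dimension of the image of `A` in `M₆(k)`, while `End_A(V)` embeds
in the centralizer of that image, so the image is not its own centralizer.
-/

open Module Submodule

section SquareZero

variable {k A V : Type*} [Field k] [CommRing A] [Algebra k A]
  [AddCommGroup V] [Module k V] [Module A V] [IsScalarTower k A V] {J : Ideal A}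

theorem smul_top_le_torsionBySet_of_sq_eq_bot (hJ2 : J ^ 2 = ⊥) :
    J • (⊤ : Submodule A V) ≤ torsionBySet A V J := by
  refine smul_le.2 fun x hx v _ => (mem_torsionBySet_iff _ _).2 fun ⟨y, hy⟩ => ?_
  have hyx : y * x = 0 := by
    have h : y * x ∈ J ^ 2 := pow_two J ▸ Ideal.mul_mem_mul hy hx
    simpa [hJ2] using h
  rw [← mul_smul, hyx, zero_smul]

variable (k V J) in
noncomputable def quotientToTorsionAddScalar :
    ((V ⧸ (J • ⊤ : Submodule A V).restrictScalars k) →ₗ[k]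
        (torsionBySet A V J).restrictScalars k) × k →ₗ[k] Module.End k V :=
  LinearMap.coprod
    (LinearMap.lcomp k V (mkQ _) ∘ₗ LinearMap.compRight k (Submodule.subtype _))
    (LinearMap.toSpanSingleton k _ LinearMap.id)

theorem quotientToTorsionAddScalar_apply
    (p : ((V ⧸ (J • ⊤ : Submodule A V).restrictScalars k) →ₗ[k]
        (torsionBySet A V J).restrictScalars k) × k) (v : V) :
    quotientToTorsionAddScalar k V J p v = p.1 (Submodule.Quotient.mk v) + p.2 • v :=
  rfl

theorem quotientToTorsionAddScalar_injective (hJV : ∃ x ∈ J, ∃ v : V, x • v ≠ 0) :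
    Function.Injective (quotientToTorsionAddScalar k V J) := by
  obtain ⟨x, hx, v, hxv⟩ := hJV
  refine (injective_iff_map_eq_zero _).2 fun ⟨g, c⟩ h => ?_
  have hxv_mem : x • v ∈ (J • ⊤ : Submodule A V).restrictScalars k :=
    (restrictScalars_mem k _ _).2 (smul_mem_smul hx mem_top)
  have hc : c = 0 := by
    have h' := LinearMap.congr_fun h (x • v)
    rw [quotientToTorsionAddScalar_apply, (Submodule.Quotient.mk_eq_zero _).2 hxv_mem, map_zero,
      ZeroMemClass.coe_zero, zero_add, LinearMap.zero_apply] at h'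
    exact (smul_eq_zero.1 h').resolve_right hxv
  subst hc
  have hg : g = 0 := by
    ext w
    simpa [quotientToTorsionAddScalar_apply] using LinearMap.congr_fun h w
  rw [hg, Prod.mk_zero_zero]

variable [SMulCommClass A k V]

variable (k) in
theorem mem_range_restrictScalarsₗ_of_smul_comm
    (hsplit : ∀ a : A, ∃ (c : k) (x : A), x ∈ J ∧ a = algebraMap k A c + x)
    {f : V →ₗ[k] V} (hf : ∀ x ∈ J, ∀ v, f (x • v) = x • f v) :
    f ∈ LinearMap.range (LinearMap.restrictScalarsₗ k A V V k) := by
  refine ⟨{ f with map_smul' := fun a v => ?_ }, rfl⟩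
  obtain ⟨c, x, hx, rfl⟩ := hsplit a
  simp [add_smul, hf x hx]

theorem range_quotientToTorsionAddScalar_le
    (hsplit : ∀ a : A, ∃ (c : k) (x : A), x ∈ J ∧ a = algebraMap k A c + x) :
    LinearMap.range (quotientToTorsionAddScalar k V J) ≤
      LinearMap.range (LinearMap.restrictScalarsₗ k A V V k) := by
  rintro _ ⟨⟨g, c⟩, rfl⟩
  refine mem_range_restrictScalarsₗ_of_smul_comm k hsplit fun x hx v => ?_
  have hxv : (Submodule.Quotient.mk (x • v) :
      V ⧸ (J • ⊤ : Submodule A V).restrictScalars k) = 0 :=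
    (Submodule.Quotient.mk_eq_zero _).2 ((restrictScalars_mem k _ _).2 (smul_mem_smul hx mem_top))
  have hxg : x • (g (Submodule.Quotient.mk v) : V) = 0 :=
    (mem_torsionBySet_iff _ _).1 (g (Submodule.Quotient.mk v)).2 ⟨x, hx⟩
  rw [quotientToTorsionAddScalar_apply, quotientToTorsionAddScalar_apply, hxv, map_zero,
    ZeroMemClass.coe_zero, zero_add, smul_add, hxg, zero_add, smul_comm]

theorem finrank_quotient_mul_finrank_torsionBySet_add_one_le [FiniteDimensional k V]
    (hsplit : ∀ a : A, ∃ (c : k) (x : A), x ∈ J ∧ a = algebraMap k A c + x)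
    (hJV : ∃ x ∈ J, ∃ v : V, x • v ≠ 0) :
    finrank k (V ⧸ (J • ⊤ : Submodule A V).restrictScalars k) *
        finrank k ((torsionBySet A V J).restrictScalars k) + 1 ≤
      finrank k (V →ₗ[A] V) :=
  calc _ = finrank k (LinearMap.range (quotientToTorsionAddScalar k V J)) := by
        rw [LinearMap.finrank_range_of_inj (quotientToTorsionAddScalar_injective hJV),
          finrank_prod, finrank_linearMap, finrank_self]
    _ ≤ finrank k (LinearMap.range (LinearMap.restrictScalarsₗ k A V V k)) :=
        finrank_mono (range_quotientToTorsionAddScalar_le hsplit)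
    _ = finrank k (V →ₗ[A] V) :=
        LinearMap.finrank_range_of_inj (LinearMap.restrictScalars_injective k)

theorem finrank_le_finrank_linearMap_of_sq_eq_bot [FiniteDimensional k V]
    (hsplit : ∀ a : A, ∃ (c : k) (x : A), x ∈ J ∧ a = algebraMap k A c + x)
    (hJ2 : J ^ 2 = ⊥) (hJV : ∃ x ∈ J, ∃ v : V, x • v ≠ 0) :
    finrank k V ≤ finrank k (V →ₗ[A] V) := by
  obtain ⟨x, hx, v, hxv⟩ := hJV
  set JV := (J • ⊤ : Submodule A V).restrictScalars k
  set VJ := (torsionBySet A V J).restrictScalars k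
  have hJV_le : JV ≤ VJ := smul_top_le_torsionBySet_of_sq_eq_bot hJ2
  have hJV_ne : JV ≠ ⊥ := fun h => hxv <| (Submodule.eq_bot_iff _).1 h _
    ((restrictScalars_mem k _ _).2 (smul_mem_smul hx mem_top))
  have hVJ_ne : VJ ≠ ⊤ := fun h => hxv <|
    (mem_torsionBySet_iff _ _).1 ((restrictScalars_mem k _ _).1 (eq_top_iff'.1 h v)) ⟨x, hx⟩
  have hde : finrank k JV ≤ finrank k VJ := finrank_mono hJV_le
  have hd : 0 < finrank k JV := Nat.pos_of_ne_zero fun h => hJV_ne (Submodule.finrank_eq_zero.1 h)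
  have he : finrank k VJ < finrank k V := Submodule.finrank_lt hVJ_ne
  have hq := finrank_quotient_add_finrank JV
  have key := finrank_quotient_mul_finrank_torsionBySet_add_one_le hsplit ⟨x, hx, v, hxv⟩
  -- with `q = dim V/JV ≥ 1`: `q e + 1 ≥ q d + 1 = q + d + (q - 1)(d - 1)`
  nlinarith

end SquareZero

theorem AlgHom.finrank_range_le {k A B : Type*} [Field k] [Ring A] [Ring B] [Algebra k A]
    [Algebra k B] [Module.Finite k A] (φ : A →ₐ[k] B) : finrank k φ.range ≤ finrank k A := by
  rw [← Subalgebra.finrank_toSubmodule]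
  exact LinearMap.finrank_range_le φ.toLinearMap

section MatrixImage

variable {k A : Type*} [Field k] [CommRing A] [Algebra k A] [Module A (Fin 6 → k)]
  [IsScalarTower k A (Fin 6 → k)] [SMulCommClass A k (Fin 6 → k)]

theorem toMatrixAlgEquiv'_restrictScalars_mem_centralizer
    (f : (Fin 6 → k) →ₗ[A] (Fin 6 → k)) :
    LinearMap.toMatrixAlgEquiv' (f.restrictScalars k) ∈
      Subalgebra.centralizer k (matrixImageOfAction k A : Set (Matrix (Fin 6) (Fin 6) k)) := by
  rintro _ ⟨a, rfl⟩
  have hcomm : Algebra.lsmul k k (Fin 6 → k) a * f.restrictScalars k =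
      f.restrictScalars k * Algebra.lsmul k k (Fin 6 → k) a :=
    LinearMap.ext fun v => (f.map_smul a v).symm
  show LinearMap.toMatrixAlgEquiv' (Algebra.lsmul k k (Fin 6 → k) a) *
      LinearMap.toMatrixAlgEquiv' (f.restrictScalars k) =
    LinearMap.toMatrixAlgEquiv' (f.restrictScalars k) *
      LinearMap.toMatrixAlgEquiv' (Algebra.lsmul k k (Fin 6 → k) a)
  rw [← map_mul, ← map_mul, hcomm]

theorem finrank_linearMap_le_finrank_centralizer :
    finrank k ((Fin 6 → k) →ₗ[A] (Fin 6 → k)) ≤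
      finrank k (Subalgebra.centralizer k
        (matrixImageOfAction k A : Set (Matrix (Fin 6) (Fin 6) k))) := by
  rw [← Subalgebra.finrank_toSubmodule]
  exact LinearMap.finrank_le_finrank_of_injective
    (f := LinearMap.codRestrict (Subalgebra.toSubmodule _)
      (LinearMap.toMatrixAlgEquiv'.toLinearMap ∘ₗ LinearMap.restrictScalarsₗ k A _ _ k)
      toMatrixAlgEquiv'_restrictScalars_mem_centralizer)
    ((LinearMap.injective_codRestrict_iff _).2 <|
      LinearMap.toMatrixAlgEquiv'.injective.comp (LinearMap.restrictScalars_injective k))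

theorem finrank_matrixImageOfAction_le [Module.Finite k A] :
    finrank k (matrixImageOfAction k A) ≤ finrank k A :=
  AlgHom.finrank_range_le _

end MatrixImage

theorem type_1_4_endomorphisms_and_not_maximal_general
    (k : Type*) [Field k]
    (A : Type*) [CommRing A] [Algebra k A] [IsLocalRing A]
    (hsplit : ∀ a : A, ∃ (c : k) (x : A),
      x ∈ IsLocalRing.maximalIdeal A ∧ a = algebraMap k A c + x)
    (hdimA : Module.finrank k A = 5)
    (hdimJ : Module.finrank k ((IsLocalRing.maximalIdeal A).restrictScalars k) = 4)
    (hJ2 : (IsLocalRing.maximalIdeal A) ^ 2 = ⊥)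
    [Module A (Fin 6 → k)] [IsScalarTower k A (Fin 6 → k)]
    [SMulCommClass A k (Fin 6 → k)]
    (hfaith : ∀ a : A, (∀ v : Fin 6 → k, a • v = 0) → a = 0) :
    6 ≤ Module.finrank k ((Fin 6 → k) →ₗ[A] (Fin 6 → k)) ∧
    matrixImageOfAction k A ≠
      Subalgebra.centralizer k
        (matrixImageOfAction k A : Set (Matrix (Fin 6) (Fin 6) k)) := by
  have hJV : ∃ x ∈ IsLocalRing.maximalIdeal A, ∃ v : Fin 6 → k, x • v ≠ 0 := by
    have hJ : (IsLocalRing.maximalIdeal A).restrictScalars k ≠ ⊥ := fun h => by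
      rw [h, finrank_bot] at hdimJ
      omega
    obtain ⟨x, hx, hx0⟩ := Submodule.exists_mem_ne_zero_of_ne_bot hJ
    by_contra! h
    exact hx0 (hfaith x (h x hx))
  have hEnd : 6 ≤ finrank k ((Fin 6 → k) →ₗ[A] (Fin 6 → k)) := by
    simpa using finrank_le_finrank_linearMap_of_sq_eq_bot hsplit hJ2 hJV
  refine ⟨hEnd, fun h => ?_⟩
  have : Module.Finite k A := Module.finite_of_finrank_eq_succ hdimA
  have hcent := finrank_linearMap_le_finrank_centralizer (k := k) (A := A)
  have himage := finrank_matrixImageOfAction_le (k := k) (A := A)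
  rw [← h] at hcent
  omega

/-- Let `k` be an algebraically closed field and `A = k·1 ⊕ J` a local commutative
`k`-algebra of dimension `5` with `dim J = 4` and `J² = 0`.  Let `V = k⁶` be a faithful
`A`-module.  Then `dim_k End_A(V) ≥ 6`; in particular the image of `A` in `M₆(k)` is not
a maximal commutative subalgebra. -/
theorem type_1_4_endomorphisms_and_not_maximal
    (k : Type*) [Field k] [IsAlgClosed k]
    (A : Type*) [CommRing A] [Algebra k A] [IsLocalRing A]
    (hsplit : ∀ a : A, ∃ (c : k) (x : A),
      x ∈ IsLocalRing.maximalIdeal A ∧ a = algebraMap k A c + x)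
    (hdimA : Module.finrank k A = 5)
    (hdimJ : Module.finrank k ((IsLocalRing.maximalIdeal A).restrictScalars k) = 4)
    (hJ2 : (IsLocalRing.maximalIdeal A) ^ 2 = ⊥)
    [Module A (Fin 6 → k)] [IsScalarTower k A (Fin 6 → k)]
    [SMulCommClass A k (Fin 6 → k)]
    (hfaith : ∀ a : A, (∀ v : Fin 6 → k, a • v = 0) → a = 0) :
    6 ≤ Module.finrank k ((Fin 6 → k) →ₗ[A] (Fin 6 → k)) ∧
    matrixImageOfAction k A ≠
      Subalgebra.centralizer k
        (matrixImageOfAction k A : Set (Matrix (Fin 6) (Fin 6) k)) :=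
  type_1_4_endomorphisms_and_not_maximal_general k A hsplit hdimA hdimJ hJ2 hfaith
end

section
/- Let k be an algebraically closed field and let A = k·1 ⊕ J be a local commutative k-algebra of dimension 5 with Hilbert–Samuel type (1,3,1), i.e. dim_k(J/J²) = 3, dim_k J² = 1, and J³ = 0. Let V = k^6 be a faithful A-module with dim_k(V/JV) = 3, dim_k(JV/J²V) = 2, dim_k(J²V) = 1. Then dim_k End_A(V) ≥ 6, and in particular the image of A in M_6(k) is not a maximal commutative subalgebra. -/
/-!
`End_A(V)` is the centralizer of the image of `A` in `End_k V`. It contains that image, of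
dimension `dim A = 5` by faithfulness, and all composites `V → V/JV → soc V → V`, where
`soc V = {v | Jv = 0}`: a space of dimension `3 s` with `s = dim soc V`. The two meet inside the
image of `ann J`, so `dim End_A(V) ≥ 5 + 3 s - dim (ann J)`.

As `J² ≠ 0`, `ann J` is a proper subspace of `J` (of dimension 4), and `J²V ⊆ soc V` gives
`s ≥ 1`; this already yields `6` unless `dim (ann J) = 3`, i.e. `J = ann J + k x`. In that case
multiplication by `x` maps `JV` (dimension 3) into `J²V` (dimension 1), and its kernel is killed
by all of `J`, so `s ≥ 2`. Finally, a dimension-5 subalgebra with a centralizer of dimension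
at least 6 is not its own centralizer.
-/

/-- The dimension of the subquotient `P / (P ∩ Q)` of two subspaces `P, Q ⊆ V`;
for `Q ⊆ P` this is the dimension of `P/Q`. -/
noncomputable def subquotientDim (k : Type*) [Field k] {V : Type*} [AddCommGroup V]
    [Module k V] (P Q : Submodule k V) : ℕ :=
  Module.finrank k (↥P ⧸ (Q.comap P.subtype))

open IsLocalRing Module Submodule

theorem Submodule.exists_sup_span_singleton_eq {K V : Type*} [Field K] [AddCommGroup V]
    [Module K V] [FiniteDimensional K V] {N M : Submodule K V} (hNM : N ≤ M)
    (h : finrank K N + 1 = finrank K M) : ∃ x ∈ M, N ⊔ K ∙ x = M := by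
  obtain ⟨x, hxM, hxN⟩ := SetLike.exists_of_lt (lt_of_le_of_ne hNM (by rintro rfl; omega))
  refine ⟨x, hxM,
    eq_of_le_of_finrank_le (sup_le hNM ((span_singleton_le_iff_mem x M).2 hxM)) ?_⟩
  have hlt : N < N ⊔ K ∙ x :=
    left_lt_sup.2 fun hle => hxN (hle (mem_span_singleton_self x))
  have := finrank_lt_finrank_of_lt hlt
  omega

theorem IsLocalRing.annihilator_maximalIdeal_lt {A : Type*} [CommRing A] [IsLocalRing A]
    (h : maximalIdeal A ^ 2 ≠ ⊥) :
    (maximalIdeal A).annihilator < maximalIdeal A := by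
  have hJ : maximalIdeal A ≠ ⊥ := fun h0 => h (by rw [h0, sq, Ideal.mul_bot])
  refine lt_of_le_of_ne (fun u hu => ?_) fun heq => h ?_
  · by_contra hu'
    refine hJ (eq_bot_iff.2 fun j hj => ?_)
    have hunit : IsUnit u := IsLocalRing.notMem_maximalIdeal.1 hu'
    rw [mem_bot, ← hunit.mul_right_eq_zero]
    exact mem_annihilator.1 hu j hj
  · rw [sq]
    nth_rewrite 1 [← heq]
    exact annihilator_mul _

theorem IsLocalRing.finrank_maximalIdeal_add_one {k A : Type*} [Field k] [CommRing A]
    [Algebra k A] [IsLocalRing A] [FiniteDimensional k A]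
    (hsplit : ∀ a : A, ∃ (c : k) (x : A), x ∈ maximalIdeal A ∧ a = algebraMap k A c + x) :
    finrank k ((maximalIdeal A).restrictScalars k) + 1 = finrank k A := by
  have hcompl : IsCompl ((maximalIdeal A).restrictScalars k) (k ∙ (1 : A)) := by
    constructor
    · refine disjoint_def.2 fun a ha h1 => ?_
      obtain ⟨c, rfl⟩ := mem_span_singleton.1 h1
      by_contra hc
      refine (mem_maximalIdeal _).1 ha ?_
      rw [← Algebra.algebraMap_eq_smul_one]
      exact (isUnit_iff_ne_zero.2 fun h0 => hc (by rw [h0, zero_smul])).map (algebraMap k A)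
    · refine codisjoint_iff.2 (eq_top_iff.2 fun a _ => ?_)
      obtain ⟨c, x, hx, rfl⟩ := hsplit a
      rw [add_comm, Algebra.algebraMap_eq_smul_one]
      exact add_mem_sup hx (smul_mem _ c (mem_span_singleton_self 1))
  rw [← finrank_add_eq_of_isCompl hcompl, finrank_span_singleton one_ne_zero]

theorem Submodule.pow_smul_top_le_torsionBySet {R M : Type*} [CommRing R] [AddCommGroup M]
    [Module R M] {I : Ideal R} {n : ℕ} (h : I ^ (n + 1) = ⊥) :
    I ^ n • (⊤ : Submodule R M) ≤ torsionBySet R M I := by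
  refine smul_le.2 fun r hr v _ => (mem_torsionBySet_iff _ _).2 fun ⟨j, hj⟩ => ?_
  have hjr : j * r ∈ I ^ (n + 1) := by
    rw [pow_succ']
    exact Ideal.mul_mem_mul hj hr
  rw [h, Ideal.mem_bot] at hjr
  rw [smul_smul, hjr, zero_smul]

section Filtration

variable {k A V : Type*} [Field k] [CommRing A] [Algebra k A] [AddCommGroup V] [Module k V]
  [Module A V] [IsScalarTower k A V] {I : Ideal A}

theorem Submodule.mem_torsionBySet_of_smul_eq_zero {x : A}
    (hI : I.annihilator.restrictScalars k ⊔ k ∙ x = I.restrictScalars k) {w : V}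
    (hw : w ∈ I • (⊤ : Submodule A V)) (hxw : x • w = 0) : w ∈ torsionBySet A V I := by
  refine (mem_torsionBySet_iff _ _).2 fun ⟨j, hj⟩ => ?_
  obtain ⟨u, hu, _, hy, rfl⟩ :=
    mem_sup.1 (hI ▸ hj : j ∈ I.annihilator.restrictScalars k ⊔ k ∙ x)
  obtain ⟨c, rfl⟩ := mem_span_singleton.1 hy
  have huw : u • w ∈ (I.annihilator * I) • (⊤ : Submodule A V) := by
    rw [Submodule.mul_smul]
    exact smul_mem_smul hu hw
  rw [annihilator_mul, bot_smul, mem_bot] at huw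
  rw [add_smul, huw, smul_assoc, hxw, smul_zero, zero_add]

theorem Submodule.finrank_smul_top_le_finrank_torsionBySet_add [FiniteDimensional k A]
    [FiniteDimensional k V]
    (hle : I.annihilator ≤ I)
    (h : finrank k (I.annihilator.restrictScalars k) + 1 = finrank k (I.restrictScalars k)) :
    finrank k ((I • (⊤ : Submodule A V)).restrictScalars k) ≤
      finrank k ((torsionBySet A V I).restrictScalars k) +
        finrank k ((I ^ 2 • (⊤ : Submodule A V)).restrictScalars k) := by
  obtain ⟨x, hxI, hx⟩ := exists_sup_span_singleton_eq (restrictScalars_mono k hle) h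
  set IV := (I • (⊤ : Submodule A V)).restrictScalars k
  let f := (Algebra.lsmul k k V x).domRestrict IV
  have hrange : LinearMap.range f ≤ (I ^ 2 • (⊤ : Submodule A V)).restrictScalars k := by
    rintro _ ⟨w, rfl⟩
    rw [restrictScalars_mem, sq, Submodule.mul_smul]
    exact smul_mem_smul hxI w.2
  have hker : (LinearMap.ker f).map IV.subtype ≤ (torsionBySet A V I).restrictScalars k := by
    rintro _ ⟨w, hw, rfl⟩
    exact mem_torsionBySet_of_smul_eq_zero hx w.2 (LinearMap.mem_ker.1 hw)
  have := finrank_mono hrange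
  have := finrank_mono hker
  rw [finrank_map_subtype_eq] at this
  have := f.finrank_range_add_finrank_ker
  omega

end Filtration

theorem Subalgebra.centralizer_coe_map_algEquiv {R B C : Type*} [CommSemiring R] [Semiring B]
    [Semiring C] [Algebra R B] [Algebra R C] (e : B ≃ₐ[R] C) (S : Subalgebra R B) :
    centralizer R (S.map (e : B →ₐ[R] C) : Set C) =
      (centralizer R S).map (e : B →ₐ[R] C) := by
  ext z
  obtain ⟨y, rfl⟩ := e.surjective z
  rw [mem_centralizer_iff, mem_map]
  constructor
  · intro h
    refine ⟨y, (mem_centralizer_iff R).2 fun g hg => e.injective ?_, rfl⟩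
    rw [map_mul, map_mul]
    exact h _ (mem_map.2 ⟨g, hg, rfl⟩)
  · rintro ⟨x, hx, hxy⟩ _ hz
    obtain ⟨g, hg, rfl⟩ := mem_map.1 hz
    rw [← hxy, ← map_mul, ← map_mul, (mem_centralizer_iff R).1 hx g hg]

section Centralizer

variable {k A V : Type*} [Field k] [CommRing A] [Algebra k A] [AddCommGroup V] [Module k V]
  [Module A V] [IsScalarTower k A V]

variable (k A V) in
abbrev actionSubalgebra : Subalgebra k (Module.End k V) :=
  (Algebra.lsmul k k V : A →ₐ[k] Module.End k V).range

theorem mem_centralizer_actionSubalgebra_iff {f : Module.End k V} :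
    f ∈ Subalgebra.centralizer k (actionSubalgebra k A V : Set (Module.End k V)) ↔
      ∀ (a : A) (v : V), f (a • v) = a • f v := by
  rw [Subalgebra.mem_centralizer_iff]
  constructor
  · exact fun h a v => (LinearMap.congr_fun (h _ ⟨a, rfl⟩) v).symm
  · rintro h _ ⟨a, rfl⟩
    exact LinearMap.ext fun v => (h a v).symm

theorem range_restrictScalarsₗ_eq_centralizer :
    LinearMap.range (LinearMap.restrictScalarsₗ k A V V k) =
      Subalgebra.toSubmodule
        (Subalgebra.centralizer k (actionSubalgebra k A V : Set (Module.End k V))) := by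
  ext f
  rw [Subalgebra.mem_toSubmodule, mem_centralizer_actionSubalgebra_iff]
  exact ⟨fun ⟨g, hg⟩ => hg ▸ g.map_smul, fun h => ⟨{ f with map_smul' := h }, rfl⟩⟩

theorem finrank_linearMap_eq_finrank_centralizer :
    finrank k (V →ₗ[A] V) =
      finrank k (Subalgebra.centralizer k (actionSubalgebra k A V : Set (Module.End k V))) := by
  rw [← Subalgebra.finrank_toSubmodule, ← range_restrictScalarsₗ_eq_centralizer,
    LinearMap.finrank_range_of_inj (LinearMap.restrictScalars_injective k)]

theorem finrank_actionSubalgebra (hfaith : ∀ a : A, (∀ v : V, a • v = 0) → a = 0) :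
    finrank k (actionSubalgebra k A V) = finrank k A := by
  have hinj : Function.Injective (Algebra.lsmul k k V : A →ₐ[k] Module.End k V) :=
    (injective_iff_map_eq_zero _).2 fun a ha => hfaith a fun v => LinearMap.congr_fun ha v
  exact (AlgEquiv.ofInjective _ hinj).toLinearEquiv.finrank_eq.symm

theorem actionSubalgebra_le_centralizer :
    actionSubalgebra k A V ≤
      Subalgebra.centralizer k (actionSubalgebra k A V : Set (Module.End k V)) := by
  rintro _ ⟨a, rfl⟩
  exact mem_centralizer_actionSubalgebra_iff.2 fun b v => smul_comm a b v

variable (k V) in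
def endOfQuotientToTorsion (I : Ideal A) :
    ((V ⧸ (I • (⊤ : Submodule A V)).restrictScalars k) →ₗ[k]
      (torsionBySet A V I).restrictScalars k) →ₗ[k] Module.End k V :=
  LinearMap.llcomp k V _ V ((torsionBySet A V I).restrictScalars k).subtype ∘ₗ
    LinearMap.lcomp k _ ((I • (⊤ : Submodule A V)).restrictScalars k).mkQ

variable {I : Ideal A}

theorem endOfQuotientToTorsion_apply (g) (v : V) :
    endOfQuotientToTorsion k V I g v = g (Submodule.Quotient.mk v) := rfl

theorem endOfQuotientToTorsion_apply_smul_eq_zero {x : A} (hx : x ∈ I) (g) (v : V) :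
    endOfQuotientToTorsion k V I g (x • v) = 0 := by
  rw [endOfQuotientToTorsion_apply, (Submodule.Quotient.mk_eq_zero _).2
    ((restrictScalars_mem k _ _).2 (smul_mem_smul hx mem_top)), map_zero, ZeroMemClass.coe_zero]

theorem smul_endOfQuotientToTorsion_apply_eq_zero {x : A} (hx : x ∈ I) (g) (v : V) :
    x • endOfQuotientToTorsion k V I g v = 0 :=
  (mem_torsionBySet_iff _ _).1 (g _).2 ⟨x, hx⟩

theorem endOfQuotientToTorsion_injective : Function.Injective (endOfQuotientToTorsion k V I) := by
  intro g h hgh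
  ext v
  exact LinearMap.congr_fun hgh v

theorem range_endOfQuotientToTorsion_le_centralizer
    (hsplit : ∀ a : A, ∃ (c : k) (x : A), x ∈ I ∧ a = algebraMap k A c + x) :
    LinearMap.range (endOfQuotientToTorsion k V I) ≤
      Subalgebra.toSubmodule
        (Subalgebra.centralizer k (actionSubalgebra k A V : Set (Module.End k V))) := by
  rintro _ ⟨g, rfl⟩
  refine mem_centralizer_actionSubalgebra_iff.2 fun a v => ?_
  obtain ⟨c, x, hx, rfl⟩ := hsplit a
  rw [add_smul, add_smul, map_add, algebraMap_smul, algebraMap_smul, map_smul,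
    endOfQuotientToTorsion_apply_smul_eq_zero hx, smul_endOfQuotientToTorsion_apply_eq_zero hx]

theorem actionSubalgebra_inf_range_endOfQuotientToTorsion_le
    (hfaith : ∀ a : A, (∀ v : V, a • v = 0) → a = 0) :
    Subalgebra.toSubmodule (actionSubalgebra k A V) ⊓
        LinearMap.range (endOfQuotientToTorsion k V I) ≤
      (I.annihilator.restrictScalars k).map
        (Algebra.lsmul k k V : A →ₐ[k] Module.End k V).toLinearMap := by
  rintro _ ⟨⟨a, rfl⟩, g, hg⟩
  refine ⟨a, mem_annihilator.2 fun j hj => hfaith _ fun v => ?_, rfl⟩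
  have := LinearMap.congr_fun hg (j • v)
  rw [endOfQuotientToTorsion_apply_smul_eq_zero hj] at this
  rw [smul_eq_mul, mul_smul]
  exact this.symm

theorem finrank_add_mul_le_finrank_centralizer_add [FiniteDimensional k A] [FiniteDimensional k V]
    (hsplit : ∀ a : A, ∃ (c : k) (x : A), x ∈ I ∧ a = algebraMap k A c + x)
    (hfaith : ∀ a : A, (∀ v : V, a • v = 0) → a = 0) :
    finrank k A + finrank k (V ⧸ (I • (⊤ : Submodule A V)).restrictScalars k) *
        finrank k ((torsionBySet A V I).restrictScalars k) ≤
      finrank k (Subalgebra.centralizer k (actionSubalgebra k A V : Set (Module.End k V))) +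
        finrank k (I.annihilator.restrictScalars k) := by
  let R := Subalgebra.toSubmodule (actionSubalgebra k A V)
  let Q := LinearMap.range (endOfQuotientToTorsion k V I)
  have hR : finrank k R = finrank k A := finrank_actionSubalgebra hfaith
  have hQ : finrank k Q = finrank k (V ⧸ (I • (⊤ : Submodule A V)).restrictScalars k) *
      finrank k ((torsionBySet A V I).restrictScalars k) := by
    rw [LinearMap.finrank_range_of_inj endOfQuotientToTorsion_injective, finrank_linearMap]
  have hsup : finrank k ↥(R ⊔ Q) ≤
      finrank k (Subalgebra.centralizer k (actionSubalgebra k A V : Set (Module.End k V))) := by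
    rw [← Subalgebra.finrank_toSubmodule]
    exact finrank_mono (sup_le (Subalgebra.toSubmodule.monotone actionSubalgebra_le_centralizer)
      (range_endOfQuotientToTorsion_le_centralizer hsplit))
  have hinf : finrank k ↥(R ⊓ Q) ≤ finrank k (I.annihilator.restrictScalars k) :=
    (finrank_mono (actionSubalgebra_inf_range_endOfQuotientToTorsion_le hfaith)).trans
      (finrank_map_le _ _)
  have := finrank_sup_add_finrank_inf_eq R Q
  omega

end Centralizer

theorem type_1_3_1_filtration_3_2_1_endomorphisms_and_not_maximal_general
    (k : Type*) [Field k]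
    (A : Type*) [CommRing A] [Algebra k A] [IsLocalRing A]
    (hsplit : ∀ a : A, ∃ (c : k) (x : A),
      x ∈ IsLocalRing.maximalIdeal A ∧ a = algebraMap k A c + x)
    (hdimA : Module.finrank k A = 5)
    (hJ2 : Module.finrank k (((IsLocalRing.maximalIdeal A) ^ 2).restrictScalars k) = 1)
    (hJ3 : (IsLocalRing.maximalIdeal A) ^ 3 = ⊥)
    [Module A (Fin 6 → k)] [IsScalarTower k A (Fin 6 → k)]
    [SMulCommClass A k (Fin 6 → k)]
    (hfaith : ∀ a : A, (∀ v : Fin 6 → k, a • v = 0) → a = 0)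
    (hVJV : Module.finrank k ((Fin 6 → k) ⧸
      (IsLocalRing.maximalIdeal A • (⊤ : Submodule A (Fin 6 → k))).restrictScalars k) = 3)
    (hJ2V : Module.finrank k
      (((IsLocalRing.maximalIdeal A) ^ 2 • (⊤ : Submodule A (Fin 6 → k))).restrictScalars k)
      = 1) :
    6 ≤ Module.finrank k ((Fin 6 → k) →ₗ[A] (Fin 6 → k)) ∧
    matrixImageOfAction k A ≠
      Subalgebra.centralizer k
        (matrixImageOfAction k A : Set (Matrix (Fin 6) (Fin 6) k)) := by
  have : FiniteDimensional k A := .of_finrank_pos (by omega)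
  have hJ := finrank_maximalIdeal_add_one hsplit
  have hJ2ne : maximalIdeal A ^ 2 ≠ ⊥ := by
    rintro h
    rw [h, restrictScalars_bot, finrank_bot] at hJ2
    exact zero_ne_one hJ2
  have hlt := annihilator_maximalIdeal_lt hJ2ne
  have hNJ := finrank_lt_finrank_of_lt ((restrictScalars_lt k).2 hlt)
  have hJV := finrank_quotient_add_finrank
    ((maximalIdeal A • (⊤ : Submodule A (Fin 6 → k))).restrictScalars k)
  have hsoc := finrank_mono (restrictScalars_mono k
    (pow_smul_top_le_torsionBySet (M := Fin 6 → k) (n := 2) hJ3))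
  have hcase := finrank_smul_top_le_finrank_torsionBySet_add (k := k) (V := Fin 6 → k) hlt.le
  have hC := finrank_add_mul_le_finrank_centralizer_add (V := Fin 6 → k) hsplit hfaith
  rw [hVJV, finrank_fin_fun] at hJV
  rw [hVJV] at hC
  have hcent : 6 ≤ finrank k (Subalgebra.centralizer k
      (actionSubalgebra k A (Fin 6 → k) : Set (Module.End k (Fin 6 → k)))) := by
    omega
  refine ⟨hcent.trans_eq finrank_linearMap_eq_finrank_centralizer.symm, fun h => ?_⟩
  rw [matrixImageOfAction, AlgHom.range_comp, Subalgebra.centralizer_coe_map_algEquiv,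
    (Subalgebra.map_injective (AlgEquiv.injective _)).eq_iff] at h
  -- `h` mentions `Algebra.lsmul` with the given `SMulCommClass` instance instead of the derived one
  change actionSubalgebra k A (Fin 6 → k) = _ at h
  have hR := finrank_actionSubalgebra (k := k) hfaith
  rw [h] at hR
  exact absurd (hcent.trans_eq hR) (by omega)

/-- Let `k` be an algebraically closed field and `A = k·1 ⊕ J` a local commutative
`k`-algebra of dimension `5` with Hilbert–Samuel type `(1,3,1)`, i.e.
`dim (J/J²) = 3`, `dim J² = 1`, `J³ = 0`.  Let `V = k⁶` be a faithful `A`-module with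
`dim (V/JV) = 3`, `dim (JV/J²V) = 2`, `dim J²V = 1`.  Then `dim_k End_A(V) ≥ 6`;
in particular the image of `A` in `M₆(k)` is not a maximal commutative subalgebra. -/
theorem type_1_3_1_filtration_3_2_1_endomorphisms_and_not_maximal
    (k : Type*) [Field k] [IsAlgClosed k]
    (A : Type*) [CommRing A] [Algebra k A] [IsLocalRing A]
    (hsplit : ∀ a : A, ∃ (c : k) (x : A),
      x ∈ IsLocalRing.maximalIdeal A ∧ a = algebraMap k A c + x)
    (hdimA : Module.finrank k A = 5)
    (hJJ2 : subquotientDim k ((IsLocalRing.maximalIdeal A).restrictScalars k)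
      (((IsLocalRing.maximalIdeal A) ^ 2).restrictScalars k) = 3)
    (hJ2 : Module.finrank k (((IsLocalRing.maximalIdeal A) ^ 2).restrictScalars k) = 1)
    (hJ3 : (IsLocalRing.maximalIdeal A) ^ 3 = ⊥)
    [Module A (Fin 6 → k)] [IsScalarTower k A (Fin 6 → k)]
    [SMulCommClass A k (Fin 6 → k)]
    (hfaith : ∀ a : A, (∀ v : Fin 6 → k, a • v = 0) → a = 0)
    (hVJV : Module.finrank k ((Fin 6 → k) ⧸
      (IsLocalRing.maximalIdeal A • (⊤ : Submodule A (Fin 6 → k))).restrictScalars k) = 3)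
    (hJVJ2V : subquotientDim k
      ((IsLocalRing.maximalIdeal A • (⊤ : Submodule A (Fin 6 → k))).restrictScalars k)
      (((IsLocalRing.maximalIdeal A) ^ 2 • (⊤ : Submodule A (Fin 6 → k))).restrictScalars k)
      = 2)
    (hJ2V : Module.finrank k
      (((IsLocalRing.maximalIdeal A) ^ 2 • (⊤ : Submodule A (Fin 6 → k))).restrictScalars k)
      = 1) :
    6 ≤ Module.finrank k ((Fin 6 → k) →ₗ[A] (Fin 6 → k)) ∧
    matrixImageOfAction k A ≠
      Subalgebra.centralizer k
        (matrixImageOfAction k A : Set (Matrix (Fin 6) (Fin 6) k)) :=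
  type_1_3_1_filtration_3_2_1_endomorphisms_and_not_maximal_general k A hsplit hdimA hJ2 hJ3 hfaith
    hVJV hJ2V
end

section
/- Let k be an algebraically closed field and let A = k·1 ⊕ J be a local commutative k-algebra of dimension 5 with Hilbert–Samuel type (1,3,1), i.e. dim_k(J/J²) = 3, dim_k J² = 1, J³ = 0. Let V be a faithful A-module with dim_k V = 6 such that dim_k(V/JV) = 4, dim_k(JV/J²V) = 1, dim_k(J²V) = 1. Then dim_k End_A(V) ≥ 8. -/
/-!
Write `J` for the maximal ideal. Pick `w ∈ JV` spanning `JV` modulo `J²V`, and `x ∈ J` with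
`x w ≠ 0` (otherwise `J²` would kill `V`). The ideal `K = J ∩ Ann w` kills `JV = A w + J²V`, so
`K J = 0` by faithfulness, and then `K V ⊆ J²V`. Hence `T = {v | K v = 0}` has codimension at most
`dim K · dim J²V ≤ 3`. Multiplication by `x` maps `V` into `T` and squares to zero on `T`
(as `x² ∈ J² ⊆ K`), so its kernel on `T` has dimension at least `2`; this kernel lies in the socle
`S = {v | J v = 0}` because `J = K + k x`. Finally `Hom_k(V/JV, S)` embeds into `End_A V`.
-/

open Module Submodule

theorem subquotientDim_add_finrank {k V : Type*} [Field k] [AddCommGroup V] [Module k V]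
    {P Q : Submodule k V} [FiniteDimensional k P] (hQP : Q ≤ P) :
    subquotientDim k P Q + finrank k Q = finrank k P := by
  rw [subquotientDim, ← (comapSubtypeEquivOfLe hQP).finrank_eq]
  exact finrank_quotient_add_finrank _

theorem exists_sub_smul_mem_of_subquotientDim_eq_one {k V : Type*} [Field k] [AddCommGroup V]
    [Module k V] {P Q : Submodule k V} (h : subquotientDim k P Q = 1) :
    ∃ w ∈ P, ∀ v ∈ P, ∃ c : k, v - c • w ∈ Q := by
  obtain ⟨q, -, hq⟩ := finrank_eq_one_iff'.mp h
  obtain ⟨w, rfl⟩ := Submodule.Quotient.mk_surjective _ q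
  refine ⟨w, w.2, fun v hv => ?_⟩
  obtain ⟨c, hc⟩ := hq (Submodule.Quotient.mk ⟨v, hv⟩)
  exact ⟨c, (Submodule.Quotient.eq (Q.comap P.subtype)).mp
    (hc.symm.trans (Submodule.Quotient.mk_smul _ c w).symm)⟩

theorem finrank_le_two_mul_finrank_ker_of_range_le_ker {k E : Type*} [Field k] [AddCommGroup E]
    [Module k E] [FiniteDimensional k E] {f : E →ₗ[k] E}
    (hf : LinearMap.range f ≤ LinearMap.ker f) :
    finrank k E ≤ 2 * finrank k (LinearMap.ker f) := by
  have := LinearMap.finrank_range_add_finrank_ker f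
  have := Submodule.finrank_mono hf
  omega

theorem smul_eq_zero_of_pow_add_eq_bot {A V : Type*} [CommRing A] [AddCommGroup V] [Module A V]
    {I : Ideal A} {m n : ℕ} (hI : I ^ (m + n) = ⊥) {x : A} (hx : x ∈ I ^ m) {v : V}
    (hv : v ∈ I ^ n • (⊤ : Submodule A V)) : x • v = 0 := by
  have := smul_mem_smul hx hv
  rwa [← Submodule.mul_smul, ← pow_add, hI, bot_smul, mem_bot] at this

theorem torsionBySet_inf_torsionBy_le {A V : Type*} [CommRing A] [AddCommGroup V] [Module A V]
    {I K : Ideal A} {x : A} (h : I ≤ K ⊔ Ideal.span {x}) :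
    torsionBySet A V K ⊓ torsionBy A V x ≤ torsionBySet A V I := by
  rintro v ⟨hvK, hvx⟩
  refine (mem_torsionBySet_iff _ _).mpr fun ⟨a, ha⟩ => ?_
  obtain ⟨y, hy, z, hz, rfl⟩ := Submodule.mem_sup.mp (h ha)
  obtain ⟨b, rfl⟩ := Ideal.mem_span_singleton'.mp hz
  rw [add_smul, mul_smul, (mem_torsionBy_iff _ _).mp hvx, smul_zero, add_zero]
  exact (mem_torsionBySet_iff _ _).mp hvK ⟨y, hy⟩

section

variable {k A V : Type*} [Field k] [CommRing A] [AddCommGroup V] [Module A V] {I : Ideal A} {w : V}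

theorem finrank_inf_annihilator_lt [Algebra k A] [FiniteDimensional k A] {x : A} (hx : x ∈ I)
    (hxw : x • w ≠ 0) :
    finrank k ((I ⊓ (A ∙ w).annihilator).restrictScalars k) < finrank k (I.restrictScalars k) :=
  Submodule.finrank_lt_finrank_of_lt <| SetLike.lt_iff_le_and_exists.mpr
    ⟨fun _ h => h.1, x, hx, fun h => hxw ((mem_annihilator_span_singleton _ _).mp h.2)⟩

variable [Module k V]

theorem le_inf_annihilator_sup_span_singleton [Algebra k A] [IsScalarTower k A V]
    (hI2V : finrank k ((I ^ 2 • (⊤ : Submodule A V)).restrictScalars k) = 1)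
    (hw : w ∈ I • (⊤ : Submodule A V)) {x : A} (hx : x ∈ I) (hxw : x • w ≠ 0) :
    I ≤ I ⊓ (A ∙ w).annihilator ⊔ Ideal.span {x} := by
  have hI2 : ∀ {a}, a ∈ I → a • w ∈ I ^ 2 • (⊤ : Submodule A V) := fun ha => by
    rw [pow_two, Submodule.mul_smul]; exact smul_mem_smul ha hw
  intro a ha
  obtain ⟨c, hc⟩ := (finrank_eq_one_iff_of_nonzero'
    (⟨x • w, hI2 hx⟩ : (I ^ 2 • (⊤ : Submodule A V)).restrictScalars k)
    (fun h => hxw (congrArg Subtype.val h))).mp hI2V ⟨a • w, hI2 ha⟩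
  have hK : a - c • x ∈ I ⊓ (A ∙ w).annihilator := by
    refine ⟨I.sub_mem ha (I.smul_of_tower_mem c hx), (mem_annihilator_span_singleton _ _).mpr ?_⟩
    rw [sub_smul, smul_assoc]
    exact sub_eq_zero.mpr (congrArg Subtype.val hc).symm
  exact mem_sup.mpr ⟨_, hK, _, Submodule.smul_of_tower_mem _ c (Ideal.mem_span_singleton_self x),
    sub_add_cancel a _⟩

variable [SMulCommClass A k V]

theorem smul_eq_zero_of_mem_smul_top_of_smul_eq_zero (hI3 : I ^ 3 = ⊥)
    (hgen : ∀ v ∈ I • (⊤ : Submodule A V), ∃ c : k, v - c • w ∈ I ^ 2 • (⊤ : Submodule A V))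
    {y : A} (hy : y ∈ I) (hyw : y • w = 0) {v : V} (hv : v ∈ I • (⊤ : Submodule A V)) :
    y • v = 0 := by
  obtain ⟨c, hc⟩ := hgen v hv
  have := smul_eq_zero_of_pow_add_eq_bot (m := 1) (n := 2) hI3 (by rwa [pow_one]) hc
  rwa [smul_sub, smul_comm y c w, hyw, smul_zero, sub_zero] at this

theorem mul_eq_zero_of_smul_eq_zero (hfaith : ∀ a : A, (∀ v : V, a • v = 0) → a = 0)
    (hI3 : I ^ 3 = ⊥)
    (hgen : ∀ v ∈ I • (⊤ : Submodule A V), ∃ c : k, v - c • w ∈ I ^ 2 • (⊤ : Submodule A V))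
    {y : A} (hy : y ∈ I) (hyw : y • w = 0) {x : A} (hx : x ∈ I) : y * x = 0 :=
  hfaith _ fun v => by
    rw [mul_smul]
    exact smul_eq_zero_of_mem_smul_top_of_smul_eq_zero hI3 hgen hy hyw (smul_mem_smul hx mem_top)

theorem exists_mem_smul_ne_zero (hfaith : ∀ a : A, (∀ v : V, a • v = 0) → a = 0)
    (hI3 : I ^ 3 = ⊥)
    (hgen : ∀ v ∈ I • (⊤ : Submodule A V), ∃ c : k, v - c • w ∈ I ^ 2 • (⊤ : Submodule A V))
    (hI2 : I ^ 2 ≠ ⊥) : ∃ x ∈ I, x • w ≠ 0 := by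
  by_contra! h
  refine hI2 (eq_bot_iff.mpr ?_)
  rw [pow_two, Ideal.mul_le]
  exact fun y hy x hx =>
    (mem_bot A).mpr (mul_eq_zero_of_smul_eq_zero hfaith hI3 hgen hy (h y hy) hx)

theorem inf_annihilator_smul_top_le_pow_two_smul
    (hfaith : ∀ a : A, (∀ v : V, a • v = 0) → a = 0) (hI3 : I ^ 3 = ⊥)
    (hgen : ∀ v ∈ I • (⊤ : Submodule A V), ∃ c : k, v - c • w ∈ I ^ 2 • (⊤ : Submodule A V))
    {x : A} (hx : x ∈ I) (hxw : x • w ≠ 0) :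
    (I ⊓ (A ∙ w).annihilator) • (⊤ : Submodule A V) ≤ I ^ 2 • (⊤ : Submodule A V) := by
  refine smul_le.mpr fun y ⟨hy, hyw⟩ v _ => ?_
  rw [SetLike.mem_coe, mem_annihilator_span_singleton] at hyw
  obtain ⟨c, hc⟩ := hgen (y • v) (smul_mem_smul hy mem_top)
  have hxc := smul_eq_zero_of_pow_add_eq_bot (m := 1) (n := 2) hI3 (x := x) (by rwa [pow_one]) hc
  rw [smul_sub, smul_smul, mul_comm, mul_eq_zero_of_smul_eq_zero hfaith hI3 hgen hy hyw hx,
    zero_smul, zero_sub, neg_eq_zero, smul_comm, smul_eq_zero] at hxc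
  simpa [hxc.resolve_right hxw] using hc

variable [Algebra k A] [IsScalarTower k A V]

theorem finrank_le_finrank_torsionBySet_add_mul [FiniteDimensional k A] [FiniteDimensional k V]
    (K : Ideal A) (N : Submodule A V) (hKN : K • (⊤ : Submodule A V) ≤ N) :
    finrank k V ≤ finrank k ((torsionBySet A V K).restrictScalars k) +
      finrank k (K.restrictScalars k) * finrank k (N.restrictScalars k) := by
  let Φ : V →ₗ[k] K.restrictScalars k →ₗ[k] N.restrictScalars k :=
    LinearMap.mk₂ k (fun v y => ⟨(y : A) • v, hKN (smul_mem_smul y.2 mem_top)⟩)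
      (fun _ _ _ => Subtype.ext (smul_add _ _ _)) (fun _ _ _ => Subtype.ext (smul_comm _ _ _))
      (fun _ _ _ => Subtype.ext (add_smul _ _ _)) (fun _ _ _ => Subtype.ext (smul_assoc _ _ _))
  have hker : LinearMap.ker Φ ≤ (torsionBySet A V K).restrictScalars k := fun v hv =>
    (mem_torsionBySet_iff _ _).mpr fun y => congrArg Subtype.val (LinearMap.congr_fun hv y)
  calc finrank k V = finrank k (LinearMap.range Φ) + finrank k (LinearMap.ker Φ) :=
        (LinearMap.finrank_range_add_finrank_ker Φ).symm
    _ ≤ finrank k (K.restrictScalars k →ₗ[k] N.restrictScalars k) +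
        finrank k ((torsionBySet A V K).restrictScalars k) :=
        add_le_add (Submodule.finrank_le _) (Submodule.finrank_mono hker)
    _ = _ := by rw [Module.finrank_linearMap, add_comm]

theorem finrank_torsionBySet_inf_annihilator_le_two_mul [FiniteDimensional k V]
    (hfaith : ∀ a : A, (∀ v : V, a • v = 0) → a = 0) (hI3 : I ^ 3 = ⊥)
    (hw : w ∈ I • (⊤ : Submodule A V))
    (hgen : ∀ v ∈ I • (⊤ : Submodule A V), ∃ c : k, v - c • w ∈ I ^ 2 • (⊤ : Submodule A V))
    (hI2V : finrank k ((I ^ 2 • (⊤ : Submodule A V)).restrictScalars k) = 1)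
    {x : A} (hx : x ∈ I) (hxw : x • w ≠ 0) :
    finrank k ((torsionBySet A V (I ⊓ (A ∙ w).annihilator : Ideal A)).restrictScalars k) ≤
      2 * finrank k ((torsionBySet A V I).restrictScalars k) := by
  set K : Ideal A := I ⊓ (A ∙ w).annihilator
  set T := (torsionBySet A V K).restrictScalars k
  have hxT : ∀ v : V, x • v ∈ T := fun v => (mem_torsionBySet_iff _ _).mpr fun ⟨y, hy⟩ => by
    rw [smul_smul, mul_eq_zero_of_smul_eq_zero hfaith hI3 hgen hy.1
      ((mem_annihilator_span_singleton _ _).mp hy.2) hx, zero_smul]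
  have hxx : x * x ∈ K := by
    refine ⟨I.mul_mem_left x hx, (mem_annihilator_span_singleton _ _).mpr ?_⟩
    refine smul_eq_zero_of_pow_add_eq_bot (m := 2) (n := 1) hI3 ?_ (by rwa [pow_one])
    rw [pow_two]
    exact Ideal.mul_mem_mul hx hx
  let f : T →ₗ[k] T := (DistribSMul.toLinearMap k V x).restrict fun v _ => hxT v
  have hf : LinearMap.range f ≤ LinearMap.ker f := by
    rintro _ ⟨t, rfl⟩
    refine LinearMap.mem_ker.mpr (Subtype.ext ?_)
    change x • x • (t : V) = 0
    rw [smul_smul]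
    exact (mem_torsionBySet_iff _ _).mp t.2 ⟨_, hxx⟩
  have hker : (LinearMap.ker f).map T.subtype ≤ (torsionBySet A V I).restrictScalars k := by
    rintro _ ⟨t, ht, rfl⟩
    exact torsionBySet_inf_torsionBy_le (le_inf_annihilator_sup_span_singleton hI2V hw hx hxw)
      ⟨t.2, congrArg Subtype.val ht⟩
  calc finrank k T ≤ 2 * finrank k (LinearMap.ker f) :=
        finrank_le_two_mul_finrank_ker_of_range_le_ker hf
    _ = 2 * finrank k ((LinearMap.ker f).map T.subtype) := by rw [finrank_map_subtype_eq]
    _ ≤ _ := by gcongr; exact Submodule.finrank_mono hker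

/-- `V → V ⧸ I V → soc V ↪ V`: when `A = k ⊕ I`, every `k`-linear map between modules killed by
`I` is `A`-linear. -/
def endOfLinearMapQuotientToSocle
    (hsplit : ∀ a : A, ∃ (c : k) (x : A), x ∈ I ∧ a = algebraMap k A c + x) :
    ((V ⧸ (I • (⊤ : Submodule A V)).restrictScalars k) →ₗ[k]
      (torsionBySet A V I).restrictScalars k) →ₗ[k] V →ₗ[A] V where
  toFun f :=
    { toFun := fun v => f (Submodule.Quotient.mk v)
      map_add' := fun v v' => by simp
      map_smul' := fun a v => by
        obtain ⟨c, x, hx, rfl⟩ := hsplit a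
        have hq : (Submodule.Quotient.mk ((algebraMap k A c + x) • v) :
            V ⧸ (I • (⊤ : Submodule A V)).restrictScalars k) = c • Submodule.Quotient.mk v := by
          rw [add_smul, algebraMap_smul, Submodule.Quotient.mk_add,
            (Submodule.Quotient.mk_eq_zero _).mpr
              ((Submodule.restrictScalars_mem k _ _).mpr (smul_mem_smul hx mem_top)), add_zero,
            Submodule.Quotient.mk_smul]
        simp only [RingHom.id_apply]
        rw [hq, map_smul, add_smul, algebraMap_smul,
          (mem_torsionBySet_iff _ _).mp (f (Submodule.Quotient.mk v)).2 ⟨x, hx⟩, add_zero]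
        rfl }
  map_add' _ _ := rfl
  map_smul' _ _ := rfl

theorem finrank_quotient_mul_finrank_torsionBySet_le [FiniteDimensional k V]
    (hsplit : ∀ a : A, ∃ (c : k) (x : A), x ∈ I ∧ a = algebraMap k A c + x) :
    finrank k (V ⧸ (I • (⊤ : Submodule A V)).restrictScalars k) *
      finrank k ((torsionBySet A V I).restrictScalars k) ≤ finrank k (V →ₗ[A] V) := by
  have : FiniteDimensional k (V →ₗ[A] V) := Module.Finite.of_injective
    (LinearMap.restrictScalarsₗ k A V V k) (LinearMap.restrictScalars_injective k)
  rw [← Module.finrank_linearMap]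
  refine LinearMap.finrank_le_finrank_of_injective (f := endOfLinearMapQuotientToSocle hsplit)
    fun f g h => ?_
  ext v
  exact LinearMap.congr_fun h v

end

theorem type_1_3_1_filtration_4_1_1_endomorphisms_general
    (k : Type*) [Field k]
    (A : Type*) [CommRing A] [Algebra k A] [IsLocalRing A]
    (hsplit : ∀ a : A, ∃ (c : k) (x : A),
      x ∈ IsLocalRing.maximalIdeal A ∧ a = algebraMap k A c + x)
    (hdimA : Module.finrank k A = 5)
    (hJJ2 : subquotientDim k ((IsLocalRing.maximalIdeal A).restrictScalars k)
      (((IsLocalRing.maximalIdeal A) ^ 2).restrictScalars k) = 3)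
    (hJ2 : Module.finrank k (((IsLocalRing.maximalIdeal A) ^ 2).restrictScalars k) = 1)
    (hJ3 : (IsLocalRing.maximalIdeal A) ^ 3 = ⊥)
    (V : Type*) [AddCommGroup V] [Module A V] [Module k V]
    [IsScalarTower k A V] [SMulCommClass A k V]
    (hfaith : ∀ a : A, (∀ v : V, a • v = 0) → a = 0)
    (hdimV : Module.finrank k V = 6)
    (hVJV : Module.finrank k
      (V ⧸ (IsLocalRing.maximalIdeal A • (⊤ : Submodule A V)).restrictScalars k) = 4)
    (hJVJ2V : subquotientDim k
      ((IsLocalRing.maximalIdeal A • (⊤ : Submodule A V)).restrictScalars k)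
      (((IsLocalRing.maximalIdeal A) ^ 2 • (⊤ : Submodule A V)).restrictScalars k) = 1)
    (hJ2V : Module.finrank k
      (((IsLocalRing.maximalIdeal A) ^ 2 • (⊤ : Submodule A V)).restrictScalars k) = 1) :
    8 ≤ Module.finrank k (V →ₗ[A] V) := by
  have : FiniteDimensional k A := .of_finrank_pos (by omega)
  have : FiniteDimensional k V := .of_finrank_pos (by omega)
  have hJ : finrank k ((IsLocalRing.maximalIdeal A).restrictScalars k) = 4 := by
    have := subquotientDim_add_finrank (P := (IsLocalRing.maximalIdeal A).restrictScalars k)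
      (Q := ((IsLocalRing.maximalIdeal A) ^ 2).restrictScalars k)
      (restrictScalars_mono k (Ideal.pow_le_self two_ne_zero))
    omega
  obtain ⟨w, hw, hgen⟩ := exists_sub_smul_mem_of_subquotientDim_eq_one hJVJ2V
  have hJ2ne : (IsLocalRing.maximalIdeal A) ^ 2 ≠ ⊥ := fun h => by
    rw [h, Submodule.restrictScalars_bot, finrank_bot] at hJ2
    exact zero_ne_one hJ2
  obtain ⟨x, hx, hxw⟩ := exists_mem_smul_ne_zero hfaith hJ3 hgen hJ2ne
  have hK := finrank_inf_annihilator_lt (k := k) hx hxw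
  have hT := finrank_le_finrank_torsionBySet_add_mul (k := k) _ _
    (inf_annihilator_smul_top_le_pow_two_smul hfaith hJ3 hgen hx hxw)
  have hS := finrank_torsionBySet_inf_annihilator_le_two_mul hfaith hJ3 hw hgen hJ2V hx hxw
  have hEnd := finrank_quotient_mul_finrank_torsionBySet_le (V := V) hsplit
  rw [hJ2V, hdimV] at hT
  rw [hVJV] at hEnd
  omega

/-- Let `k` be an algebraically closed field and `A = k·1 ⊕ J` a local commutative
`k`-algebra of dimension `5` with Hilbert–Samuel type `(1,3,1)`, i.e. `dim (J/J²) = 3`,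
`dim J² = 1`, `J³ = 0`.  Let `V` be a faithful `A`-module of dimension `6` with
`dim (V/JV) = 4`, `dim (JV/J²V) = 1`, `dim J²V = 1`.  Then `dim_k End_A(V) ≥ 8`. -/
theorem type_1_3_1_filtration_4_1_1_endomorphisms
    (k : Type*) [Field k] [IsAlgClosed k]
    (A : Type*) [CommRing A] [Algebra k A] [IsLocalRing A]
    (hsplit : ∀ a : A, ∃ (c : k) (x : A),
      x ∈ IsLocalRing.maximalIdeal A ∧ a = algebraMap k A c + x)
    (hdimA : Module.finrank k A = 5)
    (hJJ2 : subquotientDim k ((IsLocalRing.maximalIdeal A).restrictScalars k)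
      (((IsLocalRing.maximalIdeal A) ^ 2).restrictScalars k) = 3)
    (hJ2 : Module.finrank k (((IsLocalRing.maximalIdeal A) ^ 2).restrictScalars k) = 1)
    (hJ3 : (IsLocalRing.maximalIdeal A) ^ 3 = ⊥)
    (V : Type*) [AddCommGroup V] [Module A V] [Module k V]
    [IsScalarTower k A V] [SMulCommClass A k V]
    (hfaith : ∀ a : A, (∀ v : V, a • v = 0) → a = 0)
    (hdimV : Module.finrank k V = 6)
    (hVJV : Module.finrank k
      (V ⧸ (IsLocalRing.maximalIdeal A • (⊤ : Submodule A V)).restrictScalars k) = 4)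
    (hJVJ2V : subquotientDim k
      ((IsLocalRing.maximalIdeal A • (⊤ : Submodule A V)).restrictScalars k)
      (((IsLocalRing.maximalIdeal A) ^ 2 • (⊤ : Submodule A V)).restrictScalars k) = 1)
    (hJ2V : Module.finrank k
      (((IsLocalRing.maximalIdeal A) ^ 2 • (⊤ : Submodule A V)).restrictScalars k) = 1) :
    8 ≤ Module.finrank k (V →ₗ[A] V) :=
  type_1_3_1_filtration_4_1_1_endomorphisms_general k A hsplit hdimA hJJ2 hJ2 hJ3 V hfaith hdimV
    hVJV hJVJ2V hJ2V
end
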